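/- Moyal's formula: for Schwartz functions f₁, f₂, g₁, g₂ on ℝᵈ, ⟨W(f₁,g₁), W(f₂,g₂)⟩_{L²(ℝ^{2d})} = ⟨f₁, f₂⟩ · conj(⟨g₁, g₂⟩). In particular ‖W f‖_{L²(ℝ^{2d})} = ‖f‖²_{L²(ℝᵈ)}. -/

import Mathlib

/-!
For fixed `x`, `W(f, g)(x, ·)` is the Fourier transform of `y ↦ f (x + y/2) * conj (g (x - y/2))`,
so Plancherel in `ω` turns `⟪W(f₁, g₁), W(f₂, g₂)⟫` into
`∫ x, ∫ y, F (x + y/2) * G (x - y/2)` with `F = f₁ * conj f₂` and `G = g₂ * conj g₁`.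
The inner integral is the rescaled convolution `2ᵈ (F ⋆ G) (2x)`, so the double integral is
`∫ (F ⋆ G) = ∫ F * ∫ G`. Taking all four functions equal to `f` gives the norm identity.
-/

open MeasureTheory Real

/-- The cross-Wigner distribution of `f` and `g` on ℝᵈ. -/
noncomputable def W (d : ℕ) (f g : EuclideanSpace ℝ (Fin d) → ℂ)
    (x ω : EuclideanSpace ℝ (Fin d)) : ℂ :=
  ∫ y : EuclideanSpace ℝ (Fin d),
    Complex.exp (-2 * (π : ℂ) * Complex.I * ((inner ℝ ω y : ℝ) : ℂ)) *
      f (x + (1/2 : ℝ) • y) * (starRingEnd ℂ) (g (x - (1/2 : ℝ) • y))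

open Complex ComplexConjugate FourierTransform SchwartzMap

section Affine

variable {E F : Type*} [NormedAddCommGroup E] [NormedSpace ℝ E]
  [NormedAddCommGroup F] [NormedSpace ℝ F]

lemma Function.hasTemperateGrowth_const_add_smul (x₀ : E) (c : ℝ) :
    (fun y : E => x₀ + c • y).HasTemperateGrowth :=
  (HasTemperateGrowth.const x₀).add ((HasTemperateGrowth.const c).smul HasTemperateGrowth.id')

lemma antilipschitzWith_const_add_smul (x₀ : E) {c : ℝ} (hc : c ≠ 0) :
    AntilipschitzWith ‖c‖₊⁻¹ (fun y : E => x₀ + c • y) :=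
  AntilipschitzWith.of_le_mul_dist fun a b => by
    rw [dist_add_left, dist_smul₀, NNReal.coe_inv, coe_nnnorm,
      inv_mul_cancel_left₀ (norm_ne_zero_iff.2 hc)]

noncomputable def SchwartzMap.compConstAddSMul (f : 𝓢(E, F)) (x₀ : E) {c : ℝ} (hc : c ≠ 0) :
    𝓢(E, F) :=
  compCLMOfAntilipschitz ℝ (Function.hasTemperateGrowth_const_add_smul x₀ c)
    (antilipschitzWith_const_add_smul x₀ hc) f

@[simp]
lemma SchwartzMap.compConstAddSMul_apply (f : 𝓢(E, F)) (x₀ : E) {c : ℝ} (hc : c ≠ 0) (y : E) :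
    f.compConstAddSMul x₀ hc y = f (x₀ + c • y) := rfl

end Affine

section MulConj

variable {D : Type*} [NormedAddCommGroup D] [NormedSpace ℝ D]

noncomputable def SchwartzMap.mulConj (f g : 𝓢(D, ℂ)) : 𝓢(D, ℂ) :=
  pairing ((ContinuousLinearMap.mul ℝ ℂ).bilinearComp (.id ℝ ℂ) conjCLE.toContinuousLinearMap) f g

@[simp]
lemma SchwartzMap.mulConj_apply (f g : 𝓢(D, ℂ)) (x : D) :
    f.mulConj g x = f x * conj (g x) := rfl

noncomputable def wignerKernel (f g : 𝓢(D, ℂ)) (x : D) : 𝓢(D, ℂ) :=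
  (f.compConstAddSMul x (c := 1/2) (by norm_num)).mulConj
    (g.compConstAddSMul x (c := -(1/2)) (by norm_num))

lemma wignerKernel_apply (f g : 𝓢(D, ℂ)) (x y : D) :
    wignerKernel f g x y = f (x + (1/2 : ℝ) • y) * conj (g (x - (1/2 : ℝ) • y)) := by
  simp [wignerKernel, neg_smul, ← sub_eq_add_neg]

end MulConj

section Plancherel

variable {V : Type*} [NormedAddCommGroup V] [InnerProductSpace ℝ V] [FiniteDimensional ℝ V]
  [MeasurableSpace V] [BorelSpace V]

lemma SchwartzMap.integral_fourier_mul_conj_fourier (φ ψ : 𝓢(V, ℂ)) :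
    ∫ ξ, 𝓕 ⇑φ ξ * conj (𝓕 ⇑ψ ξ) = ∫ x, φ x * conj (ψ x) := by
  simpa [fourier_coe, RCLike.inner_apply] using integral_inner_fourier_fourier ψ φ

end Plancherel

section ChangeOfVariables

open Convolution

variable {𝕜 : Type*} [RCLike 𝕜]

lemma convolution_mul_apply_add_self {G : Type*} [AddCommGroup G] [MeasurableSpace G]
    [MeasurableAdd G] (μ : Measure G) [μ.IsAddLeftInvariant] (F H : G → 𝕜) (x : G) :
    (F ⋆[ContinuousLinearMap.mul 𝕜 𝕜, μ] H) (x + x) = ∫ z, F (x + z) * H (x - z) ∂μ := by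
  rw [convolution_def, ← integral_add_left_eq_self _ x]
  simp [add_sub_add_left_eq_sub]

variable {E : Type*} [NormedAddCommGroup E] [NormedSpace ℝ E] [FiniteDimensional ℝ E]
  [MeasurableSpace E] [BorelSpace E] (μ : Measure E) [μ.IsAddHaarMeasure]

theorem integral_integral_mul_add_half_smul_mul_sub_half_smul {F G : E → 𝕜}
    (hF : Integrable F μ) (hG : Integrable G μ) :
    ∫ x, ∫ y, F (x + (1/2 : ℝ) • y) * G (x - (1/2 : ℝ) • y) ∂μ ∂μ
      = (∫ x, F x ∂μ) * ∫ x, G x ∂μ := by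
  set n := Module.finrank ℝ E
  have h2 : (0 : ℝ) < 2 ^ n := by positivity
  calc ∫ x, ∫ y, F (x + (1/2 : ℝ) • y) * G (x - (1/2 : ℝ) • y) ∂μ ∂μ
      = ∫ x, (2 : ℝ) ^ n • (F ⋆[ContinuousLinearMap.mul 𝕜 𝕜, μ] G) ((2 : ℝ) • x) ∂μ := by
        congr 1 with x
        rw [Measure.integral_comp_smul μ (fun y => F (x + y) * G (x - y)), two_smul,
          convolution_mul_apply_add_self, one_div, inv_pow, inv_inv, abs_of_pos h2]
    _ = ∫ x, (F ⋆[ContinuousLinearMap.mul 𝕜 𝕜, μ] G) x ∂μ := by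
        rw [integral_smul, Measure.integral_comp_smul, abs_of_pos (inv_pos.2 h2),
          smul_inv_smul₀ h2.ne']
    _ = (∫ x, F x ∂μ) * ∫ x, G x ∂μ := integral_convolution _ hF hG

end ChangeOfVariables

section Moyal

variable {d : ℕ}

local notation "𝓔" => EuclideanSpace ℝ (Fin d)

lemma W_eq_fourier_wignerKernel (f g : 𝓢(𝓔, ℂ)) (x : 𝓔) :
    W d f g x = 𝓕 ⇑(wignerKernel f g x) := by
  ext ω
  rw [W, Real.fourier_eq']
  congr 1 with y
  rw [wignerKernel_apply, smul_eq_mul, real_inner_comm y ω]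
  push_cast
  rw [mul_right_comm _ I, mul_assoc]

lemma integral_W_mul_conj_W (f₁ g₁ f₂ g₂ : 𝓢(𝓔, ℂ)) (x : 𝓔) :
    ∫ ω, W d f₁ g₁ x ω * conj (W d f₂ g₂ x ω)
      = ∫ y, f₁.mulConj f₂ (x + (1/2 : ℝ) • y) * g₂.mulConj g₁ (x - (1/2 : ℝ) • y) := by
  rw [W_eq_fourier_wignerKernel, W_eq_fourier_wignerKernel, integral_fourier_mul_conj_fourier]
  congr 1 with y
  simp only [wignerKernel_apply, mulConj_apply, map_mul, conj_conj]
  ring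

theorem integral_integral_W_mul_conj_W (f₁ g₁ f₂ g₂ : 𝓢(𝓔, ℂ)) :
    ∫ x, ∫ ω, W d f₁ g₁ x ω * conj (W d f₂ g₂ x ω)
      = (∫ y, f₁ y * conj (f₂ y)) * conj (∫ y, g₁ y * conj (g₂ y)) := by
  simp_rw [integral_W_mul_conj_W, integral_integral_mul_add_half_smul_mul_sub_half_smul volume
    (f₁.mulConj f₂).integrable (g₂.mulConj g₁).integrable, ← integral_conj, mulConj_apply,
    map_mul, conj_conj, mul_comm (g₂ _)]

end Moyal

lemma integral_mul_conj_self {α : Type*} [MeasurableSpace α] (μ : Measure α) (u : α → ℂ) :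
    ∫ a, u a * conj (u a) ∂μ = ((∫ a, ‖u a‖ ^ 2 ∂μ : ℝ) : ℂ) := by
  simp_rw [mul_conj, normSq_eq_norm_sq]
  exact integral_complex_ofReal

theorem stmt9 (d : ℕ)
    (f₁ f₂ g₁ g₂ : SchwartzMap (EuclideanSpace ℝ (Fin d)) ℂ) :
    ((∫ x : EuclideanSpace ℝ (Fin d), ∫ ω : EuclideanSpace ℝ (Fin d),
        W d ⇑f₁ ⇑g₁ x ω * (starRingEnd ℂ) (W d ⇑f₂ ⇑g₂ x ω))
      = (∫ y : EuclideanSpace ℝ (Fin d), f₁ y * (starRingEnd ℂ) (f₂ y)) *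
          (starRingEnd ℂ) (∫ y : EuclideanSpace ℝ (Fin d), g₁ y * (starRingEnd ℂ) (g₂ y))) ∧
    (∀ f : SchwartzMap (EuclideanSpace ℝ (Fin d)) ℂ,
      (∫ x : EuclideanSpace ℝ (Fin d), ∫ ω : EuclideanSpace ℝ (Fin d), ‖W d ⇑f ⇑f x ω‖ ^ 2)
        = (∫ y : EuclideanSpace ℝ (Fin d), ‖f y‖ ^ 2) ^ 2) := by
  refine ⟨integral_integral_W_mul_conj_W f₁ g₁ f₂ g₂, fun f => ?_⟩
  have h := integral_integral_W_mul_conj_W f f f f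
  simp_rw [integral_mul_conj_self] at h
  rw [integral_complex_ofReal, conj_ofReal, ← sq] at h
  exact_mod_cast h
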